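/- Let A_k = [a_{k,l}, a_{k,r}] and B_k = [b_{k,l}, b_{k,r}] be closed intervals in ℝ for k = 1,…,K, and suppose the Lebesgue measure of the symmetric difference A_k △ B_k is at most c for every k. Then the Lebesgue measure of the symmetric difference of the intersections, (⋂_{k=1}^K A_k) △ (⋂_{k=1}^K B_k), is at most 2c. -/
import Mathlib


open MeasureTheory

/-- If `A k = [al k, ar k]` and `B k = [bl k, br k]` are closed intervals in ℝ
whose symmetric differences all have Lebesgue measure at most `c`, then the symmetric
difference of the intersections has measure at most `2 * c`. -/
theorem stmt0 (K : ℕ) (hK : 0 < K) (al ar bl br : Fin K → ℝ) (c : ENNReal)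
    (h : ∀ k, volume (symmDiff (Set.Icc (al k) (ar k)) (Set.Icc (bl k) (br k))) ≤ c) :
    volume (symmDiff (⋂ k, Set.Icc (al k) (ar k)) (⋂ k, Set.Icc (bl k) (br k))) ≤ 2 * c := by
  have : Nonempty (Fin K) := ⟨⟨0, hK⟩⟩
  obtain ⟨ka, hka⟩ := Finite.exists_max al
  obtain ⟨kb, hkb⟩ := Finite.exists_max bl
  obtain ⟨kra, hkra⟩ := Finite.exists_min ar
  obtain ⟨krb, hkrb⟩ := Finite.exists_min br
  have hA : (⋂ k, Set.Icc (al k) (ar k)) = Set.Icc (al ka) (ar kra) := by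
    ext x
    simp only [Set.mem_iInter, Set.mem_Icc]
    exact ⟨fun hx => ⟨(hx ka).1, (hx kra).2⟩,
      fun hx k => ⟨(hka k).trans hx.1, hx.2.trans (hkra k)⟩⟩
  have hB : (⋂ k, Set.Icc (bl k) (br k)) = Set.Icc (bl kb) (br krb) := by
    ext x
    simp only [Set.mem_iInter, Set.mem_Icc]
    exact ⟨fun hx => ⟨(hx kb).1, (hx krb).2⟩,
      fun hx k => ⟨(hkb k).trans hx.1, hx.2.trans (hkrb k)⟩⟩
  rw [hA, hB]
  set kL := if al ka ≤ bl kb then kb else ka with hkL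
  set kR := if br krb ≤ ar kra then krb else kra with hkR
  have hsub : symmDiff (Set.Icc (al ka) (ar kra)) (Set.Icc (bl kb) (br krb)) ⊆
      symmDiff (Set.Icc (al kL) (ar kL)) (Set.Icc (bl kL) (br kL)) ∪
      symmDiff (Set.Icc (al kR) (ar kR)) (Set.Icc (bl kR) (br kR)) := by
    intro x hx
    rw [Set.mem_symmDiff] at hx
    simp only [Set.mem_Icc, not_and, not_le] at hx
    rcases hx with ⟨⟨h1, h2⟩, h3⟩ | ⟨⟨h1, h2⟩, h3⟩
    · -- x ∈ A \ B : x < bl kb or br krb < x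
      rcases lt_or_ge x (bl kb) with hl | hl
      · -- left case: kL = kb, x ∈ A_kb \ B_kb
        have hkLb : kL = kb := by
          rw [hkL, if_pos (le_of_lt (lt_of_le_of_lt h1 hl))]
        left
        rw [Set.mem_symmDiff, hkLb]
        refine Or.inl ⟨⟨(hka kb).trans h1, h2.trans (hkra kb)⟩, ?_⟩
        simp only [Set.mem_Icc, not_and, not_le]
        exact fun hb => ((not_le.mpr hl) hb).elim
      · -- right case: br krb < x, kR = krb, x ∈ A_krb \ B_krb
        have hr : br krb < x := h3 hl
        have hkRb : kR = krb := by
          rw [hkR, if_pos (le_of_lt (lt_of_lt_of_le hr h2))]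
        right
        rw [Set.mem_symmDiff, hkRb]
        refine Or.inl ⟨⟨(hka krb).trans h1, h2.trans (hkra krb)⟩, ?_⟩
        simp only [Set.mem_Icc, not_and, not_le]
        exact fun _ => hr
    · -- x ∈ B \ A : x < al ka or ar kra < x
      rcases lt_or_ge x (al ka) with hl | hl
      · -- left case: kL = ka, x ∈ B_ka \ A_ka
        have hkLa : kL = ka := by
          rw [hkL, if_neg (not_le.mpr (lt_of_le_of_lt h1 hl))]
        left
        rw [Set.mem_symmDiff, hkLa]
        refine Or.inr ⟨⟨(hkb ka).trans h1, h2.trans (hkrb ka)⟩, ?_⟩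
        simp only [Set.mem_Icc, not_and, not_le]
        exact fun hal => ((not_le.mpr hl) hal).elim
      · -- right case: ar kra < x, kR = kra, x ∈ B_kra \ A_kra
        have hr : ar kra < x := h3 hl
        have hkRa : kR = kra := by
          rw [hkR, if_neg (not_le.mpr (lt_of_lt_of_le hr h2))]
        right
        rw [Set.mem_symmDiff, hkRa]
        refine Or.inr ⟨⟨(hkb kra).trans h1, h2.trans (hkrb kra)⟩, ?_⟩
        simp only [Set.mem_Icc, not_and, not_le]
        exact fun _ => hr
  calc volume (symmDiff (Set.Icc (al ka) (ar kra)) (Set.Icc (bl kb) (br krb)))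
      ≤ volume (symmDiff (Set.Icc (al kL) (ar kL)) (Set.Icc (bl kL) (br kL)) ∪
        symmDiff (Set.Icc (al kR) (ar kR)) (Set.Icc (bl kR) (br kR))) := measure_mono hsub
    _ ≤ volume (symmDiff (Set.Icc (al kL) (ar kL)) (Set.Icc (bl kL) (br kL))) +
        volume (symmDiff (Set.Icc (al kR) (ar kR)) (Set.Icc (bl kR) (br kR))) :=
        measure_union_le _ _
    _ ≤ c + c := add_le_add (h kL) (h kR)
    _ = 2 * c := (two_mul c).symm
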